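/- If ψ(x + y) − ψ(x) = y + O(x^{1/2} log² x) uniformly for 0 < y ≤ x, then for every ε > 0 and all sufficiently large x, the interval (x, x + x^{1/2+ε}] contains a prime. -/

import Mathlib

/-!
If no prime lies in `(x, x + y]`, then `θ (x + y) = θ x`, so `ψ (x + y) - ψ x ≤ ψ (x + y) - θ (x + y)`,
which is `O(√x)` because only the proper prime powers contribute. Taking `y = x ^ (1/2 + δ)`, the
hypothesis gives `ψ (x + y) - ψ x ≥ y - O(√x log² x)`, which is impossible once `x ^ δ` outgrows
`log² x`.
-/

open Filter ArithmeticFunction in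
/-- The Chebyshev psi function `ψ(x) = ∑_{n ≤ x} Λ(n)`. -/
noncomputable def chebyshevPsi (x : ℝ) : ℝ :=
  ∑ n ∈ Finset.range (⌊x⌋₊ + 1), ArithmeticFunction.vonMangoldt n

open Real Filter Asymptotics Chebyshev

theorem chebyshevPsi_eq_psi : chebyshevPsi = ψ := by
  funext x
  rw [chebyshevPsi, psi_eq_sum_Icc, Nat.range_succ_eq_Icc_zero]

theorem Chebyshev.theta_le_theta_of_forall_prime_le {x x' : ℝ}
    (h : ∀ p : ℕ, p.Prime → (p : ℝ) ≤ x' → (p : ℝ) ≤ x) : θ x' ≤ θ x := by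
  refine Finset.sum_le_sum_of_subset_of_nonneg (fun p hp ↦ ?_) fun p _ _ ↦ log_natCast_nonneg p
  simp only [Finset.mem_filter, Finset.mem_Ioc] at hp ⊢
  obtain ⟨⟨hp0, hpx'⟩, hp⟩ := hp
  exact ⟨⟨hp0, Nat.le_floor (h p hp ((Nat.le_floor_iff' hp0.ne').mp hpx'))⟩, hp⟩

theorem Chebyshev.exists_psi_sub_psi_le_mul_sqrt_of_forall_prime_le :
    ∃ C, 0 ≤ C ∧ ∀ x x' : ℝ, (∀ p : ℕ, p.Prime → (p : ℝ) ≤ x' → (p : ℝ) ≤ x) →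
      ψ x' - ψ x ≤ C * √x' := by
  obtain ⟨C, hC⟩ := psi_sub_theta_le_mul_sqrt
  refine ⟨max C 0, le_max_right _ _, fun x x' h ↦ ?_⟩
  calc ψ x' - ψ x ≤ ψ x' - θ x' := by
        linarith [theta_le_psi x, theta_le_theta_of_forall_prime_le h]
    _ ≤ C * √x' := hC x'
    _ ≤ max C 0 * √x' := by gcongr; exact le_max_left _ _

theorem eventually_mul_log_sq_add_lt_rpow {δ : ℝ} (hδ : 0 < δ) (A B : ℝ) :
    ∀ᶠ x : ℝ in atTop, A * log x ^ 2 + B < x ^ δ := by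
  have hlog : (fun x : ℝ ↦ log x ^ 2) =o[atTop] fun x ↦ x ^ δ :=
    (isLittleO_log_rpow_rpow_atTop 2 hδ).congr_left fun x ↦ rpow_two _
  have hconst : (fun _ : ℝ ↦ B) =o[atTop] fun x ↦ x ^ δ :=
    isLittleO_const_left.mpr <| .inr <| tendsto_norm_atTop_atTop.comp (tendsto_rpow_atTop hδ)
  have hpos : ∀ᶠ x : ℝ in atTop, 0 < ‖x ^ δ‖ :=
    (eventually_gt_atTop 0).mono fun x hx ↦ norm_pos_iff.mpr (rpow_pos_of_pos hx δ).ne'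
  filter_upwards [((hlog.const_mul_left A).add hconst).eventuallyLT_norm_of_eventually_pos hpos,
    eventually_gt_atTop 0] with x hx hx0
  rw [Real.norm_of_nonneg (rpow_pos_of_pos hx0 δ).le] at hx
  exact (le_abs_self _).trans_lt hx

theorem eventually_exists_prime_mem_Ioc_add_rpow {C x₀ δ : ℝ} (hδ : 0 < δ) (hδ' : δ ≤ 1 / 2)
    (h : ∀ x ≥ x₀, ∀ y, 0 < y → y ≤ x → y ≤ ψ (x + y) - ψ x + C * √x * log x ^ 2) :
    ∀ᶠ x : ℝ in atTop, ∃ p : ℕ, p.Prime ∧ x < p ∧ (p : ℝ) ≤ x + x ^ (1 / 2 + δ) := by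
  obtain ⟨C', hC'0, hC'⟩ := exists_psi_sub_psi_le_mul_sqrt_of_forall_prime_le
  filter_upwards [eventually_ge_atTop x₀, eventually_ge_atTop 1,
    eventually_mul_log_sq_add_lt_rpow hδ C (2 * C')] with x hx₀ hx1 hlt
  by_contra! hno
  set y := x ^ (1 / 2 + δ) with hy
  have hx0 : 0 < x := by linarith
  have hy0 : 0 < y := rpow_pos_of_pos hx0 _
  have hyx : y ≤ x := by
    calc y ≤ x ^ (1 : ℝ) := rpow_le_rpow_of_exponent_le hx1 (by linarith)
      _ = x := rpow_one x
  have hsqrt : √(x + y) ≤ 2 * √x :=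
    sqrt_le_iff.mpr ⟨by positivity, by rw [mul_pow, sq_sqrt hx0.le]; linarith⟩
  have hgap : ψ (x + y) - ψ x ≤ C' * √(x + y) :=
    hC' x (x + y) fun p hp hpy ↦ not_lt.mp fun hxp ↦ (hno p hp hxp).not_ge hpy
  have hy_eq : y = √x * x ^ δ := by rw [hy, rpow_add hx0, sqrt_eq_rpow]
  have hbound : √x * x ^ δ ≤ √x * (C * log x ^ 2 + 2 * C') :=
    calc √x * x ^ δ = y := hy_eq.symm
      _ ≤ ψ (x + y) - ψ x + C * √x * log x ^ 2 := h x hx₀ y hy0 hyx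
      _ ≤ C' * (2 * √x) + C * √x * log x ^ 2 := by grw [hgap, hsqrt]
      _ = √x * (C * log x ^ 2 + 2 * C') := by ring
  exact hlt.not_ge (le_of_mul_le_mul_left hbound (sqrt_pos.mpr hx0))

open Filter in
theorem psi_estimate_implies_primes_in_short_intervals
    (h : ∃ C : ℝ, ∃ x₀ : ℝ, ∀ x ≥ x₀, ∀ y : ℝ, 0 < y → y ≤ x →
      |chebyshevPsi (x + y) - chebyshevPsi x - y| ≤ C * x ^ ((1 : ℝ)/2) * (Real.log x)^2) :
    ∀ ε : ℝ, 0 < ε → ∃ x₁ : ℝ, ∀ x ≥ x₁, ∃ p : ℕ, p.Prime ∧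
      x < p ∧ (p : ℝ) ≤ x + x ^ ((1 : ℝ)/2 + ε) := by
  obtain ⟨C, x₀, hC⟩ := h
  intro ε hε
  have hlower : ∀ x ≥ x₀, ∀ y, 0 < y → y ≤ x → y ≤ ψ (x + y) - ψ x + C * √x * log x ^ 2 := by
    intro x hx y hy hyx
    have := (abs_le.mp (hC x hx y hy hyx)).1
    rw [chebyshevPsi_eq_psi, ← sqrt_eq_rpow] at this
    linarith
  have hδ : min ε (1 / 2) ≤ ε := min_le_left _ _
  obtain ⟨x₁, hx₁⟩ := eventually_atTop.mp <| (eventually_exists_prime_mem_Ioc_add_rpow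
    (lt_min hε one_half_pos) (min_le_right _ _) hlower).and (eventually_ge_atTop 1)
  refine ⟨x₁, fun x hx ↦ ?_⟩
  obtain ⟨⟨p, hp, hxp, hpx⟩, hx1⟩ := hx₁ x hx
  exact ⟨p, hp, hxp, hpx.trans (by gcongr)⟩
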